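/- A distal continuous map on a compact metric space with at least two points cannot have mean ergodic shadowing. -/

import Mathlib

open Filter Metric

noncomputable def cnt (E : Set ℕ) (n : ℕ) : ℝ :=
  ∑ i ∈ Finset.range n, Set.indicator E (fun _ => (1 : ℝ)) i

def DensityZero (E : Set ℕ) : Prop :=
  Filter.Tendsto (fun n : ℕ => cnt E n / n) Filter.atTop (nhds 0)

noncomputable def upperDensity (E : Set ℕ) : ℝ :=
  Filter.limsup (fun n : ℕ => cnt E n / n) Filter.atTop

noncomputable def lowerDensity (E : Set ℕ) : ℝ :=
  Filter.liminf (fun n : ℕ => cnt E n / n) Filter.atTop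

variable {X : Type*}

def ErgodicPseudoOrbit [MetricSpace X] (f : X → X) (δ : ℝ) (ξ : ℕ → X) : Prop :=
  DensityZero {i | δ ≤ dist (f (ξ i)) (ξ (i + 1))}

def AvgShadows [MetricSpace X] (f : X → X) (ε : ℝ) (p : X) (ξ : ℕ → X) : Prop :=
  Filter.limsup (fun n : ℕ => (∑ i ∈ Finset.range n, dist (f^[i] p) (ξ i)) / n) Filter.atTop < ε

def MeanErgodicShadowingAvg [MetricSpace X] (f : X → X) : Prop :=
  ∀ ε > 0, ∃ δ > 0, ∀ ξ : ℕ → X, ErgodicPseudoOrbit f δ ξ → ∃ p : X, AvgShadows f ε p ξ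

def MeanErgodicShadowingDens [MetricSpace X] (f : X → X) : Prop :=
  ∀ ε > 0, ∃ δ > 0, ∀ ξ : ℕ → X, ErgodicPseudoOrbit f δ ξ →
    ∃ p : X, upperDensity {i | ε ≤ dist (f^[i] p) (ξ i)} < ε

def Shadowing [MetricSpace X] (f : X → X) : Prop :=
  ∀ ε > 0, ∃ δ > 0, ∀ ξ : ℕ → X, (∀ i, dist (f (ξ i)) (ξ (i + 1)) < δ) →
    ∃ p : X, ∀ i, dist (f^[i] p) (ξ i) < ε



/-! Distality makes every point of `X × X` almost periodic: in the Ellis semigroup of a distal map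
an idempotent of a minimal left ideal is the identity, so every orbit closure is minimal, and
compactness turns minimality into syndetic return times.

Mean ergodic shadowing passes to `f × f`. Given points `w ∈ U` and `w' ∈ V` of open sets of
`X × X`, shadow the pseudo-orbit that on each dyadic block `[2 ^ k, 2 ^ (k + 1))` follows the
orbit of `w` for even `k` and of `w'` for odd `k`. Its jumps have density zero, and since a block
is half of `[0, 2 ^ (k + 1))` while the returns of `w` and `w'` have positive lower density, the
shadowing orbit comes close to `w` and, much later, close to `w'`. So `f × f` is transitive, and
by Baire some `(x, y)` has an orbit accumulating on all of `X × X`: near some `(a, b)` with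
`a ≠ b`, so `x ≠ y`, and near the diagonal, so `x` and `y` are proximal, contradicting
distality.
-/

section Counting

variable {A B E R : Set ℕ}

lemma cnt_nonneg (E : Set ℕ) (n : ℕ) : 0 ≤ cnt E n :=
  Finset.sum_nonneg fun _ _ => Set.indicator_nonneg (fun _ _ => zero_le_one) _

lemma cnt_le_cnt {n : ℕ} (h : ∀ i < n, i ∈ A → i ∈ B) : cnt A n ≤ cnt B n := by
  refine Finset.sum_le_sum fun i hi => ?_
  by_cases hA : i ∈ A
  · simp [Set.indicator, hA, h i (Finset.mem_range.1 hi) hA]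
  · rw [Set.indicator_of_notMem hA]
    exact Set.indicator_nonneg (fun _ _ => zero_le_one) i

lemma cnt_add (E : Set ℕ) (m n : ℕ) : cnt E (m + n) = cnt E m + cnt ((m + ·) ⁻¹' E) n :=
  Finset.sum_range_add _ m n

lemma cnt_mono (E : Set ℕ) {m n : ℕ} (h : m ≤ n) : cnt E m ≤ cnt E n := by
  obtain ⟨k, rfl⟩ := Nat.exists_eq_add_of_le h
  rw [cnt_add]
  linarith [cnt_nonneg ((m + ·) ⁻¹' E) k]

lemma cnt_le_self (E : Set ℕ) (n : ℕ) : cnt E n ≤ n := by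
  calc cnt E n ≤ cnt Set.univ n := cnt_le_cnt fun _ _ _ => trivial
    _ = n := by simp [cnt]

lemma cnt_union_le (A B : Set ℕ) (n : ℕ) : cnt (A ∪ B) n ≤ cnt A n + cnt B n := by
  rw [cnt, cnt, cnt, ← Finset.sum_add_distrib]
  refine Finset.sum_le_sum fun i _ => ?_
  by_cases hA : i ∈ A <;> by_cases hB : i ∈ B <;> simp [Set.indicator, hA, hB]

lemma one_le_cnt {j n : ℕ} (hj : j < n) (hE : j ∈ E) : 1 ≤ cnt E n := by
  calc (1 : ℝ) = Set.indicator E (fun _ => (1 : ℝ)) j := by simp [hE]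
    _ ≤ cnt E n := Finset.single_le_sum
        (fun i _ => Set.indicator_nonneg (fun _ _ => zero_le_one) i) (Finset.mem_range.2 hj)

lemma eventually_cnt_lt_of_upperDensity_lt {ε : ℝ} (h : upperDensity E < ε) :
    ∀ᶠ n : ℕ in atTop, cnt E n < ε * n := by
  have hbdd : IsBoundedUnder (· ≤ ·) atTop fun n : ℕ => cnt E n / n :=
    isBoundedUnder_of ⟨1, fun n => div_le_one_of_le₀ (cnt_le_self E n) n.cast_nonneg⟩
  filter_upwards [eventually_lt_of_limsup_lt h hbdd, eventually_gt_atTop 0] with n hn hn0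
  rwa [div_lt_iff₀ (by exact_mod_cast hn0)] at hn

lemma DensityZero.mono (hB : DensityZero B) (h : A ⊆ B) : DensityZero A :=
  squeeze_zero (fun n => div_nonneg (cnt_nonneg A n) n.cast_nonneg)
    (fun n => div_le_div_of_nonneg_right (cnt_le_cnt fun _ _ hi => h hi) n.cast_nonneg) hB

lemma le_cnt_of_syndetic {K : ℕ} (hK : 0 < K) (hR : ∀ m, ∃ j ∈ Set.Ico m (m + K), j ∈ R)
    (L : ℕ) : (L : ℝ) / K - 1 ≤ cnt R L := by
  have hmul : ∀ q : ℕ, (q : ℝ) ≤ cnt R (q * K) := by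
    intro q
    induction q with
    | zero => simp [cnt]
    | succ q ih =>
      obtain ⟨j, ⟨hj₁, hj₂⟩, hjR⟩ := hR (q * K)
      have hshift : 1 ≤ cnt ((q * K + ·) ⁻¹' R) K :=
        one_le_cnt (j := j - q * K) (by omega) (by simpa [Nat.add_sub_cancel' hj₁])
      rw [Nat.succ_mul, cnt_add]
      push_cast
      linarith
  have hKpos : (0 : ℝ) < K := by exact_mod_cast hK
  have hfloor : (L : ℝ) / K - 1 ≤ (L / K : ℕ) := by
    have : (L : ℝ) < (L / K : ℕ) * K + K := by exact_mod_cast Nat.lt_div_mul_add hK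
    rw [sub_le_iff_le_add, div_le_iff₀ hKpos]
    linarith
  linarith [hmul (L / K), cnt_mono R (Nat.div_mul_le_self L K)]

lemma exists_mem_add_notMem_of_cnt_lt {L : ℕ} (h : cnt B (L + L) < cnt R L) :
    ∃ j < L, j ∈ R ∧ L + j ∉ B := by
  by_contra! hcon
  have hle : cnt R L ≤ cnt ((L + ·) ⁻¹' B) L := cnt_le_cnt hcon
  rw [cnt_add] at h
  linarith [cnt_nonneg B L]

lemma cnt_setOf_succ_eq_two_pow_le (n : ℕ) :
    cnt {i | ∃ k, i + 1 = 2 ^ k} n ≤ Nat.log 2 n + 1 := by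
  classical
  have hsub : (Finset.range n).filter (· ∈ {i | ∃ k, i + 1 = 2 ^ k}) ⊆
      (Finset.range (Nat.log 2 n + 1)).image fun k => 2 ^ k - 1 := by
    intro i hi
    obtain ⟨hin, k, hk⟩ : i < n ∧ ∃ k, i + 1 = 2 ^ k := by simpa using hi
    exact Finset.mem_image.2 ⟨k, Finset.mem_range.2
      (Nat.lt_succ_of_le (Nat.le_log_of_pow_le one_lt_two (by omega))), by omega⟩
  calc cnt {i | ∃ k, i + 1 = 2 ^ k} n
      = ((Finset.range n).filter (· ∈ {i | ∃ k, i + 1 = 2 ^ k})).card := by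
        simp [cnt, Set.indicator_apply, Finset.sum_boole]
    _ ≤ Nat.log 2 n + 1 := by
        exact_mod_cast (Finset.card_le_card hsub).trans
          (Finset.card_image_le.trans_eq (Finset.card_range _))

lemma tendsto_log_natCast_div_atTop :
    Tendsto (fun n : ℕ => Real.log n / n) atTop (nhds 0) := by
  have := (Real.tendsto_pow_log_div_mul_add_atTop 1 0 1 one_ne_zero).comp
    tendsto_natCast_atTop_atTop
  simpa [Function.comp_def] using this

lemma densityZero_setOf_succ_eq_two_pow : DensityZero {i | ∃ k, i + 1 = 2 ^ k} := by
  have hlim : Tendsto (fun n : ℕ => (Real.log n / n) / Real.log 2 + 1 / n) atTop (nhds 0) := by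
    simpa using (tendsto_log_natCast_div_atTop.div_const (Real.log 2)).add
      tendsto_one_div_atTop_nhds_zero_nat
  refine squeeze_zero (fun n => div_nonneg (cnt_nonneg _ n) n.cast_nonneg) (fun n => ?_) hlim
  calc cnt {i | ∃ k, i + 1 = 2 ^ k} n / n ≤ (Real.logb 2 n + 1) / n := by
        gcongr
        have hlog := Real.natLog_le_logb n 2
        push_cast at hlog
        linarith [cnt_setOf_succ_eq_two_pow_le n]
    _ = (Real.log n / n) / Real.log 2 + 1 / n := by
        rw [Real.logb, add_div]; ring

end Counting

section BlockOrbit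

variable {Y : Type*} (g : Y → Y) (q : ℕ → Y)

def blockOrbit (i : ℕ) : Y := g^[i - 2 ^ Nat.log 2 i] (q (Nat.log 2 i))

lemma blockOrbit_two_pow_add {k j : ℕ} (hj : j < 2 ^ k) :
    blockOrbit g q (2 ^ k + j) = g^[j] (q k) := by
  have hlog : Nat.log 2 (2 ^ k + j) = k := by
    rw [Nat.log_eq_iff (Or.inr ⟨one_lt_two, by positivity⟩), pow_succ]
    omega
  simp [blockOrbit, hlog]

lemma blockOrbit_succ {i : ℕ} (hi : ∀ k, i + 1 ≠ 2 ^ k) :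
    g (blockOrbit g q i) = blockOrbit g q (i + 1) := by
  have hi0 : i ≠ 0 := by simpa using hi 0
  have hlow : 2 ^ Nat.log 2 i ≤ i := Nat.pow_log_le_self 2 hi0
  have hhigh : i + 1 < 2 ^ Nat.log 2 i * 2 := by
    rw [← pow_succ]
    exact lt_of_le_of_ne (Nat.lt_pow_succ_log_self one_lt_two i) (hi _)
  generalize Nat.log 2 i = k at hlow hhigh
  obtain ⟨j, rfl⟩ := Nat.exists_eq_add_of_le hlow
  rw [add_assoc, blockOrbit_two_pow_add g q (by omega), blockOrbit_two_pow_add g q (by omega),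
    Function.iterate_succ_apply']

lemma ergodicPseudoOrbit_blockOrbit [MetricSpace Y] {δ : ℝ} (hδ : 0 < δ) :
    ErgodicPseudoOrbit g δ (blockOrbit g q) := by
  refine DensityZero.mono densityZero_setOf_succ_eq_two_pow fun i hi => ?_
  by_contra hjump
  have hδle : δ ≤ dist (g (blockOrbit g q i)) (blockOrbit g q (i + 1)) := hi
  rw [blockOrbit_succ g q fun k hk => hjump ⟨k, hk⟩, dist_self] at hδle
  linarith

end BlockOrbit

section Distal

variable {Y Y' : Type*} [PseudoMetricSpace Y] [PseudoMetricSpace Y']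

def ProximalPair (g : Y → Y) (u v : Y) : Prop :=
  ∀ η > 0, ∃ᶠ n in atTop, dist (g^[n] u) (g^[n] v) < η

def IsDistal (g : Y → Y) : Prop :=
  ∀ u v, ProximalPair g u v → u = v

variable {g : Y → Y} {g' : Y' → Y'}

lemma ProximalPair.liminf_dist_eq_zero [CompactSpace Y] {u v : Y} (h : ProximalPair g u v) :
    liminf (fun n => dist (g^[n] u) (g^[n] v)) atTop = 0 := by
  have hbdd : ∀ n, dist (g^[n] u) (g^[n] v) ≤ diam (Set.univ : Set Y) := fun n =>
    dist_le_diam_of_mem isCompact_univ.isBounded trivial trivial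
  refine le_antisymm (le_of_forall_pos_le_add fun η hη => ?_) ?_
  · simpa using liminf_le_of_frequently_le ((h η hη).mono fun n hn => hn.le)
      (isBoundedUnder_of ⟨0, fun n => dist_nonneg⟩)
  · exact le_liminf_of_le (isBoundedUnder_of ⟨_, hbdd⟩).isCoboundedUnder_ge
      (Eventually.of_forall fun n => dist_nonneg)

lemma isDistal_of_liminf_dist_eq_zero_imp_eq [CompactSpace Y]
    (h : ∀ u v : Y, liminf (fun n => dist (g^[n] u) (g^[n] v)) atTop = 0 → u = v) :
    IsDistal g :=
  fun u v huv => h u v huv.liminf_dist_eq_zero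

lemma IsDistal.prodMap (hg : IsDistal g) (hg' : IsDistal g') : IsDistal (Prod.map g g') := by
  intro u v huv
  have hdist : ∀ n, dist ((Prod.map g g')^[n] u) ((Prod.map g g')^[n] v) =
      max (dist (g^[n] u.1) (g^[n] v.1)) (dist (g'^[n] u.2) (g'^[n] v.2)) := fun n => by
    simp [Prod.map_iterate, Prod.dist_eq]
  refine Prod.ext (hg _ _ fun η hη => ?_) (hg' _ _ fun η hη => ?_) <;>
    refine (huv η hη).mono fun n hn => ?_ <;> rw [hdist] at hn
  exacts [(le_max_left _ _).trans_lt hn, (le_max_right _ _).trans_lt hn]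

end Distal

section Ellis

variable {Z : Type*} [TopologicalSpace Z] {h : Z → Z}

def ellisSemigroup (h : Z → Z) : Set (Z → Z) := closure (Set.range fun n : ℕ => h^[n])

lemma iterate_mem_ellisSemigroup (n : ℕ) : h^[n] ∈ ellisSemigroup h :=
  subset_closure ⟨n, rfl⟩

lemma comp_mem_ellisSemigroup (hh : Continuous h) {φ ψ : Z → Z} (hφ : φ ∈ ellisSemigroup h)
    (hψ : ψ ∈ ellisSemigroup h) : φ ∘ ψ ∈ ellisSemigroup h := by
  have hiter : ∀ n, h^[n] ∘ ψ ∈ ellisSemigroup h := fun n =>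
    map_mem_closure (continuous_pi fun z => (hh.iterate n).comp (continuous_apply z)) hψ
      (by rintro _ ⟨m, rfl⟩; exact ⟨n + m, Function.iterate_add h n m⟩)
  exact Set.MapsTo.closure_left (by rintro _ ⟨n, rfl⟩; exact hiter n)
    (continuous_pi fun z => continuous_apply (ψ z)) isClosed_closure hφ

lemma apply_mem_closure_orbit {φ : Z → Z} (hφ : φ ∈ ellisSemigroup h) (z : Z) :
    φ z ∈ closure (Set.range fun n => h^[n] z) :=
  map_mem_closure (f := fun ψ : Z → Z => ψ z) (continuous_apply z) hφ
    (by rintro _ ⟨n, rfl⟩; exact ⟨n, rfl⟩)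

lemma exists_mem_ellisSemigroup_apply_eq [CompactSpace Z] [T2Space Z] {y z : Z}
    (hy : y ∈ closure (Set.range fun n => h^[n] z)) : ∃ φ ∈ ellisSemigroup h, φ z = y := by
  have hcpt : IsCompact ((fun φ : Z → Z => φ z) '' ellisSemigroup h) :=
    isClosed_closure.isCompact.image (continuous_apply z)
  exact closure_minimal
    (by rintro _ ⟨n, rfl⟩; exact ⟨h^[n], iterate_mem_ellisSemigroup n, rfl⟩)
    hcpt.isClosed hy

lemma exists_minimal_nonempty_isClosed_of_chain {Y : Type*} [TopologicalSpace Y]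
    [CompactSpace Y]
    {P : Set Y → Prop} (hP : ∀ c : Set (Set Y), c.Nonempty → IsChain (· ⊆ ·) c →
      (∀ s ∈ c, P s ∧ IsClosed s ∧ s.Nonempty) → P (⋂₀ c))
    {s : Set Y} (hs : P s ∧ IsClosed s ∧ s.Nonempty) :
    ∃ t ⊆ s, Minimal (fun t => P t ∧ IsClosed t ∧ t.Nonempty) t := by
  refine zorn_superset_nonempty {t | P t ∧ IsClosed t ∧ t.Nonempty}
    (fun c hc hchain hne => ⟨⋂₀ c,
      ⟨hP c hne hchain hc, isClosed_sInter fun t ht => (hc ht).2.1, ?_⟩,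
      fun t ht => Set.sInter_subset_of_mem ht⟩) s hs
  have : Nonempty c := hne.to_subtype
  refine IsCompact.nonempty_sInter_of_directed_nonempty_isCompact_isClosed (fun a ha b hb => ?_)
    (fun t ht => (hc ht).2.2) (fun t ht => (hc ht).2.1.isCompact) fun t ht => (hc ht).2.1
  rcases hchain.total ha hb with hab | hba
  exacts [⟨a, ha, subset_rfl, hab⟩, ⟨b, hb, hba, subset_rfl⟩]

theorem exists_idempotent_absorbing_mem_ellisSemigroup [CompactSpace Z] [T2Space Z]
    (hh : Continuous h) : ∃ u ∈ ellisSemigroup h, u ∘ u = u ∧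
      ∀ φ ∈ ellisSemigroup h, ∃ χ ∈ ellisSemigroup h, χ ∘ (φ ∘ u) = u := by
  set E := ellisSemigroup h
  obtain ⟨L, -, hLmin⟩ := exists_minimal_nonempty_isClosed_of_chain
    (P := fun L => L ⊆ E ∧ ∀ φ ∈ E, ∀ g ∈ L, φ ∘ g ∈ L)
    (fun c ⟨t, ht⟩ _ hc => ⟨(Set.sInter_subset_of_mem ht).trans (hc t ht).1.1,
      fun φ hφ g hg => Set.mem_sInter.2 fun s hs =>
        (hc s hs).1.2 φ hφ g (Set.mem_sInter.1 hg s hs)⟩)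
    ⟨⟨subset_rfl, fun φ hφ g hg => comp_mem_ellisSemigroup hh hφ hg⟩, isClosed_closure,
      ⟨_, iterate_mem_ellisSemigroup 0⟩⟩
  obtain ⟨⟨hLE, hLideal⟩, hLclosed, hLne⟩ := hLmin.prop
  have hcyclic : ∀ g ∈ L, (· ∘ g) '' E = L := fun g hg => hLmin.eq_of_subset
    ⟨⟨by rintro _ ⟨φ, hφ, rfl⟩; exact comp_mem_ellisSemigroup hh hφ (hLE hg),
      by rintro φ hφ _ ⟨ψ, hψ, rfl⟩
         exact ⟨φ ∘ ψ, comp_mem_ellisSemigroup hh hφ hψ, rfl⟩⟩,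
      (isClosed_closure.isCompact.image (continuous_pi fun z => continuous_apply (g z))).isClosed,
      ⟨_, _, iterate_mem_ellisSemigroup 0, rfl⟩⟩
    (by rintro _ ⟨φ, hφ, rfl⟩; exact hLideal φ hφ g hg)
  obtain ⟨u, huL, huu⟩ : ∃ u ∈ L, u ∘ u = u := by
    -- Ellis–Numakura, for `Z → Z` seen as the monoid `Function.End Z` under composition
    let : TopologicalSpace (Function.End Z) := inferInstanceAs (TopologicalSpace (Z → Z))
    have : T2Space (Function.End Z) := inferInstanceAs (T2Space (Z → Z))
    exact exists_idempotent_in_compact_subsemigroup (M := Function.End Z)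
      (fun r => continuous_pi fun z => continuous_apply (r z)) L hLne hLclosed.isCompact
      fun a ha b hb => hLideal a (hLE ha) b hb
  refine ⟨u, hLE huL, huu, fun φ hφ => ?_⟩
  rw [← hcyclic _ (hLideal φ hφ u huL)] at huL
  exact huL

end Ellis

section AlmostPeriodic

variable {Z : Type*} {h : Z → Z}

def AlmostPeriodicPt [TopologicalSpace Z] (h : Z → Z) (z : Z) : Prop :=
  ∀ U ∈ nhds z, ∃ K, ∀ m, ∃ j ∈ Set.Ico m (m + K), h^[j] z ∈ U

lemma almostPeriodicPt_of_forall_mem_closure_orbit [TopologicalSpace Z] [CompactSpace Z]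
    (hh : Continuous h) {z : Z}
    (hmin : ∀ y ∈ closure (Set.range fun n => h^[n] z),
      z ∈ closure (Set.range fun n => h^[n] y)) :
    AlmostPeriodicPt h z := by
  intro U hU
  obtain ⟨V, hVU, hVo, hzV⟩ := mem_nhds_iff.1 hU
  have hcover : closure (Set.range fun n => h^[n] z) ⊆
      ⋃ K : ℕ, ⋃ n ∈ Set.Iio K, h^[n] ⁻¹' V := by
    intro y hy
    obtain ⟨_, hV, n, rfl⟩ := mem_closure_iff.1 (hmin y hy) V hVo hzV
    exact Set.mem_iUnion.2 ⟨n + 1, Set.mem_iUnion₂.2 ⟨n, Nat.lt_succ_self n, hV⟩⟩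
  obtain ⟨K, hK⟩ := isClosed_closure.isCompact.elim_directed_cover _
    (fun K => isOpen_biUnion fun n _ => hVo.preimage (hh.iterate n)) hcover
    (Monotone.directed_le fun K K' hKK' =>
      Set.biUnion_mono (Set.Iio_subset_Iio hKK') fun _ _ => le_rfl)
  refine ⟨K, fun m => ?_⟩
  obtain ⟨n, hn, hnV⟩ := Set.mem_iUnion₂.1 (hK (subset_closure ⟨m, rfl⟩))
  exact ⟨n + m, ⟨by omega, by simp at hn; omega⟩, hVU (by rwa [Function.iterate_add_apply])⟩

variable [MetricSpace Z]

lemma proximalPair_of_mem_ellisSemigroup {φ : Z → Z} (hφ : φ ∈ ellisSemigroup h) {x y : Z}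
    (hxy : φ x = φ y) : ProximalPair h x y := by
  intro η hη
  refine frequently_atTop.2 fun N => ?_
  have hsplit : (Set.range fun n : ℕ => h^[n]) =
      (fun n => h^[n]) '' Set.Iio N ∪ (fun n => h^[n]) '' Set.Ici N := by
    rw [← Set.image_union, Set.Iio_union_Ici, Set.image_univ]
  rw [ellisSemigroup, hsplit, closure_union, ((Set.finite_Iio N).image _).isClosed.closure_eq]
    at hφ
  -- either `φ = h^[m]` with `m < N`, and the orbits of `x` and `y` merge at time `m`,
  -- or `φ` is a limit of iterates `h^[n]` with `n ≥ N`
  rcases hφ with ⟨m, hm, rfl⟩ | hφ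
  · refine ⟨N, le_rfl, ?_⟩
    have hN : h^[N] = h^[N - m] ∘ h^[m] := by
      rw [← Function.iterate_add]
      congr 1
      simp at hm
      omega
    simpa [hN, hxy] using hη
  · have hnear : ∀ z, (fun ψ : Z → Z => ψ z) ⁻¹' ball (φ z) (η / 2) ∈ nhds φ :=
      fun z => (continuous_apply z).continuousAt.preimage_mem_nhds (ball_mem_nhds _ (half_pos hη))
    obtain ⟨_, ⟨hx, hy⟩, n, hn, rfl⟩ :=
      mem_closure_iff_nhds.1 hφ _ (inter_mem (hnear x) (hnear y))
    refine ⟨n, hn, ?_⟩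
    calc dist (h^[n] x) (h^[n] y) ≤ dist (h^[n] x) (φ x) + dist (h^[n] y) (φ y) := by
          rw [hxy]; exact dist_triangle_right _ _ _
      _ < η / 2 + η / 2 := add_lt_add hx hy
      _ = η := add_halves η

variable [CompactSpace Z]

lemma IsDistal.mem_closure_orbit (hd : IsDistal h) (hh : Continuous h) {y z : Z}
    (hy : y ∈ closure (Set.range fun n => h^[n] z)) :
    z ∈ closure (Set.range fun n => h^[n] y) := by
  obtain ⟨u, huE, huu, hmin⟩ := exists_idempotent_absorbing_mem_ellisSemigroup hh
  have hu : ∀ x, u x = x := fun x =>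
    (hd x (u x) (proximalPair_of_mem_ellisSemigroup huE (congrFun huu x).symm)).symm
  obtain ⟨φ, hφ, rfl⟩ := exists_mem_ellisSemigroup_apply_eq hy
  obtain ⟨χ, hχ, hχu⟩ := hmin φ hφ
  have hχz : χ (φ z) = z := by simpa [hu] using congrFun hχu z
  simpa only [hχz] using apply_mem_closure_orbit hχ (φ z)

lemma IsDistal.almostPeriodicPt (hd : IsDistal h) (hh : Continuous h) (z : Z) :
    AlmostPeriodicPt h z :=
  almostPeriodicPt_of_forall_mem_closure_orbit hh fun _ hy => hd.mem_closure_orbit hh hy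

end AlmostPeriodic

section Shadowing

variable {Y Y' : Type*} [MetricSpace Y] [MetricSpace Y'] {g : Y → Y} {g' : Y' → Y'}

def MeanErgodicShadowingCnt (g : Y → Y) : Prop :=
  ∀ ε > 0, ∃ δ > 0, ∀ ξ : ℕ → Y, ErgodicPseudoOrbit g δ ξ →
    ∃ p : Y, ∀ᶠ n : ℕ in atTop, cnt {i | ε ≤ dist (g^[i] p) (ξ i)} n < ε * n

lemma MeanErgodicShadowingDens.cnt (hg : MeanErgodicShadowingDens g) :
    MeanErgodicShadowingCnt g := fun ε hε =>
  (hg ε hε).imp fun _ ⟨hδ, H⟩ =>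
    ⟨hδ, fun ξ hξ => (H ξ hξ).imp fun _ hp => eventually_cnt_lt_of_upperDensity_lt hp⟩

lemma MeanErgodicShadowingCnt.prodMap (hg : MeanErgodicShadowingCnt g)
    (hg' : MeanErgodicShadowingCnt g') : MeanErgodicShadowingCnt (Prod.map g g') := by
  intro ε hε
  obtain ⟨δ, hδ, H⟩ := hg (ε / 2) (half_pos hε)
  obtain ⟨δ', hδ', H'⟩ := hg' (ε / 2) (half_pos hε)
  refine ⟨min δ δ', lt_min hδ hδ', fun ξ hξ => ?_⟩
  obtain ⟨p, hp⟩ := H (fun i => (ξ i).1) <| DensityZero.mono hξ fun i (hi : δ ≤ _) =>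
    (min_le_left _ _).trans (hi.trans (le_max_left _ _))
  obtain ⟨p', hp'⟩ := H' (fun i => (ξ i).2) <| DensityZero.mono hξ fun i (hi : δ' ≤ _) =>
    (min_le_right _ _).trans (hi.trans (le_max_right _ _))
  refine ⟨(p, p'), ?_⟩
  filter_upwards [hp, hp'] with n hn hn'
  calc _ ≤ cnt ({i | ε / 2 ≤ dist (g^[i] p) (ξ i).1} ∪
        {i | ε / 2 ≤ dist (g'^[i] p') (ξ i).2}) n := by
        refine cnt_le_cnt fun i _ (hi : ε ≤ _) => ?_
        simp only [Prod.map_iterate, Prod.dist_eq, Prod.map_fst, Prod.map_snd] at hi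
        rcases le_max_iff.1 hi with h | h
        exacts [Or.inl (show ε / 2 ≤ dist (g^[i] p) (ξ i).1 by linarith),
          Or.inr (show ε / 2 ≤ dist (g'^[i] p') (ξ i).2 by linarith)]
    _ ≤ _ := cnt_union_le _ _ n
    _ < ε * n := by linarith

lemma eventually_exists_dist_iterate_lt_of_blockOrbit {q : ℕ → Y} {K : ℕ} (hK : 0 < K)
    {η ε : ℝ} (hε : ε ≤ 1 / (4 * K))
    (hq : ∀ k m, ∃ j ∈ Set.Ico m (m + K), dist (g^[j] (q k)) (q k) < η) {p : Y}
    (hp : ∀ᶠ n : ℕ in atTop, cnt {i | ε ≤ dist (g^[i] p) (blockOrbit g q i)} n < ε * n) :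
    ∀ᶠ k in atTop, ∃ s ≥ 2 ^ k, dist (g^[s] p) (q k) < ε + η := by
  obtain ⟨n₀, hn₀⟩ := eventually_atTop.1 hp
  refine eventually_atTop.2 ⟨n₀ + 2 * K, fun k hk => ?_⟩
  have hk2 : k < 2 ^ k := Nat.lt_two_pow_self
  set L := 2 ^ k
  have hcnt : cnt {i | ε ≤ dist (g^[i] p) (blockOrbit g q i)} (L + L) <
      cnt {j | dist (g^[j] (q k)) (q k) < η} L := by
    have hKpos : (0 : ℝ) < K := by exact_mod_cast hK
    have hLK : (2 * K : ℝ) ≤ L := by exact_mod_cast (show 2 * K ≤ L by omega)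
    have hεL : ε * ((L + L : ℕ) : ℝ) ≤ L / K - 1 := by
      calc ε * ((L + L : ℕ) : ℝ) ≤ 1 / (4 * K) * (L + L) := by push_cast; gcongr
        _ = L / K - L / (2 * K) := by field_simp; ring
        _ ≤ L / K - 1 := by gcongr; rwa [le_div_iff₀ (by positivity), one_mul]
    linarith [hn₀ (L + L) (by omega),
      le_cnt_of_syndetic (R := {j | dist (g^[j] (q k)) (q k) < η}) hK (hq k) L]
  obtain ⟨j, hjL, hjR, hjB⟩ := exists_mem_add_notMem_of_cnt_lt hcnt
  have hshadow : dist (g^[L + j] p) (g^[j] (q k)) < ε := by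
    rw [← blockOrbit_two_pow_add g q hjL]
    exact not_le.1 hjB
  refine ⟨L + j, by omega, ?_⟩
  calc dist (g^[L + j] p) (q k) ≤ dist (g^[L + j] p) (g^[j] (q k)) + dist (g^[j] (q k)) (q k) :=
        dist_triangle _ _ _
    _ < ε + η := add_lt_add hshadow hjR

theorem MeanErgodicShadowingCnt.exists_iterate_mem (hg : MeanErgodicShadowingCnt g)
    (hap : ∀ z, AlmostPeriodicPt g z) {U V : Set Y} (hU : IsOpen U) (hV : IsOpen V)
    (hUne : U.Nonempty) (hVne : V.Nonempty) (N : ℕ) :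
    ∃ y ∈ U, ∃ n ≥ N, g^[n] y ∈ V := by
  obtain ⟨w, hw⟩ := hUne
  obtain ⟨w', hw'⟩ := hVne
  obtain ⟨r, hr, hrU⟩ := Metric.isOpen_iff.1 hU w hw
  obtain ⟨r', hr', hrV⟩ := Metric.isOpen_iff.1 hV w' hw'
  set ρ := min r r' / 2 with hρ
  have hρpos : 0 < ρ := by positivity
  obtain ⟨K, hK⟩ := hap w _ (ball_mem_nhds w hρpos)
  obtain ⟨K', hK'⟩ := hap w' _ (ball_mem_nhds w' hρpos)
  let q : ℕ → Y := fun k => if Even k then w else w'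
  have hq : ∀ k m, ∃ j ∈ Set.Ico m (m + (K + K' + 1)), dist (g^[j] (q k)) (q k) < ρ := by
    intro k m
    by_cases hk : Even k
    · obtain ⟨j, hj, hjw⟩ := hK m
      exact ⟨j, ⟨hj.1, by grind⟩, by simpa [q, hk] using hjw⟩
    · obtain ⟨j, hj, hjw⟩ := hK' m
      exact ⟨j, ⟨hj.1, by grind⟩, by simpa [q, hk] using hjw⟩
  set ε := min ρ (1 / (4 * ((K + K' + 1 : ℕ) : ℝ)))
  have hερ : ε ≤ ρ := min_le_left _ _
  obtain ⟨δ, hδ, H⟩ := hg ε (by positivity)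
  obtain ⟨p, hp⟩ := H _ (ergodicPseudoOrbit_blockOrbit g q hδ)
  obtain ⟨M, hM⟩ := eventually_atTop.1
    (eventually_exists_dist_iterate_lt_of_blockOrbit (by omega) (min_le_right _ _) hq hp)
  have hnear : ∀ k ≥ M, ∃ s ≥ 2 ^ k, dist (g^[s] p) (q k) < min r r' := fun k hk =>
    (hM k hk).imp fun _ ⟨hs, hd⟩ => ⟨hs, by linarith⟩
  obtain ⟨s, -, hs⟩ := hnear (2 * M) (by omega)
  obtain ⟨t, ht, htV⟩ := hnear (2 * (M + s + N) + 1) (by omega)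
  have hst : s + N < t := lt_of_lt_of_le (by omega) (Nat.lt_two_pow_self.trans_le ht)
  refine ⟨g^[s] p, hrU ?_, t - s, by omega, hrV ?_⟩
  · simpa [q] using hs.trans_le (min_le_left r r')
  · rw [← Function.iterate_add_apply, Nat.sub_add_cancel (by omega)]
    simpa [q, Nat.not_even_two_mul_add_one] using htV.trans_le (min_le_right r r')

end Shadowing

theorem exists_frequently_iterate_mem_of_forall_open {Y : Type*} [TopologicalSpace Y]
    [BaireSpace Y] [SecondCountableTopology Y] [Nonempty Y] {g : Y → Y} (hg : Continuous g)
    (htrans : ∀ U V : Set Y, IsOpen U → IsOpen V → U.Nonempty → V.Nonempty →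
      ∀ N, ∃ y ∈ U, ∃ n ≥ N, g^[n] y ∈ V) :
    ∃ y, ∀ V, IsOpen V → V.Nonempty → ∃ᶠ n in atTop, g^[n] y ∈ V := by
  have : Countable (TopologicalSpace.countableBasis Y) :=
    (TopologicalSpace.countable_countableBasis Y).to_subtype
  let O : TopologicalSpace.countableBasis Y × ℕ → Set Y := fun bN =>
    ⋃ n ≥ bN.2, g^[n] ⁻¹' bN.1
  have hO : ∀ bN, IsOpen (O bN) := fun bN => isOpen_biUnion fun n _ =>
    (TopologicalSpace.isOpen_of_mem_countableBasis bN.1.2).preimage (hg.iterate n)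
  have hdense : ∀ bN, Dense (O bN) := fun ⟨⟨b, hb⟩, N⟩ =>
    dense_iff_inter_open.2 fun W hW hWne => by
      obtain ⟨y, hyW, n, hn, hyb⟩ := htrans W b hW
        (TopologicalSpace.isOpen_of_mem_countableBasis hb) hWne
        (TopologicalSpace.nonempty_of_mem_countableBasis hb) N
      exact ⟨y, hyW, Set.mem_iUnion₂.2 ⟨n, hn, hyb⟩⟩
  obtain ⟨y, hy⟩ := (dense_iInter_of_isOpen hO hdense).nonempty
  refine ⟨y, fun V hV ⟨x, hx⟩ => frequently_atTop.2 fun N => ?_⟩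
  obtain ⟨b, hb, -, hbV⟩ :=
    (TopologicalSpace.isBasis_countableBasis Y).exists_subset_of_mem_open hx hV
  obtain ⟨n, hn, hnb⟩ := Set.mem_iUnion₂.1 (Set.mem_iInter.1 hy ⟨⟨b, hb⟩, N⟩)
  exact ⟨n, hn, hbV hnb⟩

theorem stmt13 {X : Type*} [MetricSpace X] [CompactSpace X] [Nontrivial X]
    (f : X → X) (hf : Continuous f)
    (hdistal : ∀ u v : X,
      Filter.liminf (fun n : ℕ => dist (f^[n] u) (f^[n] v)) Filter.atTop = 0 → u = v) :
    ¬ MeanErgodicShadowingDens f := by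
  intro hmes
  have hd : IsDistal f := isDistal_of_liminf_dist_eq_zero_imp_eq hdistal
  have hff : Continuous (Prod.map f f) := hf.prodMap hf
  obtain ⟨⟨x, y⟩, hxy⟩ := exists_frequently_iterate_mem_of_forall_open hff
    fun U V hU hV hUne hVne => (hmes.cnt.prodMap hmes.cnt).exists_iterate_mem
      ((hd.prodMap hd).almostPeriodicPt hff) hU hV hUne hVne
  have hvisit : ∀ a b : X, ∀ η > 0,
      ∃ᶠ n in atTop, dist (f^[n] x) a < η ∧ dist (f^[n] y) b < η :=
    fun a b η hη => (hxy _ isOpen_ball ⟨(a, b), mem_ball_self hη⟩).mono fun n hn => by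
      simpa [Prod.map_iterate, Prod.dist_eq] using hn
  obtain ⟨a, b, hab⟩ := exists_pair_ne X
  have hne : x ≠ y := by
    rintro rfl
    obtain ⟨n, hna, hnb⟩ := (hvisit a b _ (half_pos (dist_pos.2 hab))).exists
    linarith [dist_triangle_left a b (f^[n] x)]
  refine hne (hd x y fun η hη => (hvisit a a _ (half_pos hη)).mono fun n ⟨hxa, hya⟩ => ?_)
  linarith [dist_triangle_right (f^[n] x) (f^[n] y) a]
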